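/- Let G = (V, E) be a finite simple graph with m edges, let i ≥ 2, let α ≥ i + 2, and let nonnegative weights w_{i−1}, w_i, w_{i+1} be given (with w_0 = 0, w_1 = 1). Construct the hypergraph H whose vertex set is V together with new vertices s_1, …, s_α and t_1, …, t_α, and whose hyperedges are: all 2-element subsets of {s_1, …, s_α}, all 2-element subsets of {t_1, …, t_α}, and for each edge {x, y} ∈ E the two hyperedges {s_1, …, s_{i−1}, x, y, t_1, …, t_{i+1}} and {s_1, …, s_{i+1}, x, y, t_1, …, t_{i−1}}. Then for every cut S* with {s_1, …, s_α} ⊆ S* and {t_1, …, t_α} disjoint from S*, the cardinality-based cost of S* equals 2·w_i·c + (w_{i−1} + w_{i+1})·(m − c), where c is the number of edges of G with exactly one endpoint in S*. -/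

import Mathlib

/-- The split value of a hyperedge `e` with respect to a cut `S`:
`min (|e ∩ S|, |e \ S|)`. -/
def splitVal {W : Type*} [DecidableEq W] (S e : Finset W) : ℕ :=
  min (e ∩ S).card (e \ S).card

/-- The vertex set of the constructed hypergraph: the original vertices `V`
together with `s`-vertices and `t`-vertices (indexed by naturals). -/
abbrev Vtx (V : Type*) := V ⊕ ℕ ⊕ ℕ

/-- The vertex `s_i`. -/
def sV {V : Type*} (i : ℕ) : Vtx V := Sum.inr (Sum.inl i)

/-- The vertex `t_i`. -/
def tV {V : Type*} (i : ℕ) : Vtx V := Sum.inr (Sum.inr i)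

/-- The set `{s_1, …, s_j}`. -/
def sSet (V : Type*) [DecidableEq V] (j : ℕ) : Finset (Vtx V) := (Finset.Icc 1 j).image sV

/-- The set `{t_1, …, t_j}`. -/
def tSet (V : Type*) [DecidableEq V] (j : ℕ) : Finset (Vtx V) := (Finset.Icc 1 j).image tV

/-- The two endpoints of a graph edge, as a `Finset`. -/
def pairFinset {V : Type*} [DecidableEq V] (e : Sym2 V) : Finset V :=
  Sym2.lift ⟨fun x y => ({x, y} : Finset V), fun _ _ => Finset.pair_comm _ _⟩ e

/-- The image `{x, y}` (inside `Vtx V`) of a graph edge `{x, y}`. -/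
def edgeImg {V : Type*} [DecidableEq V] (e : Sym2 V) : Finset (Vtx V) :=
  (pairFinset e).image Sum.inl

/-- The maximum cut value of `G`: the maximum over subsets `U` of the vertex set
of the number of edges with exactly one endpoint in `U`. -/
def maxCut {V : Type*} [Fintype V] [DecidableEq V] (G : SimpleGraph V)
    [DecidableRel G.Adj] : ℕ :=
  Finset.univ.sup fun U : Finset V =>
    (G.edgeFinset.filter (fun e => (pairFinset e ∩ U).card = 1)).card

/-- The hyperedge family built from `G`: the 2-element subsets of the two cliques,
and for each edge `{x,y}` of `G` the two hyperedges
`{s_1,…,s_{i-1},x,y,t_1,…,t_{i+1}}` and `{s_1,…,s_{i+1},x,y,t_1,…,t_{i-1}}`. -/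
def H4 {V : Type*} [Fintype V] [DecidableEq V] (G : SimpleGraph V) [DecidableRel G.Adj]
    (α i : ℕ) : Finset (Finset (Vtx V)) :=
  (sSet V α).powersetCard 2 ∪ (tSet V α).powersetCard 2 ∪
    G.edgeFinset.image (fun e => sSet V (i - 1) ∪ edgeImg e ∪ tSet V (i + 1)) ∪
    G.edgeFinset.image (fun e => sSet V (i + 1) ∪ edgeImg e ∪ tSet V (i - 1))

/-!
Each clique hyperedge lies entirely on one side of the cut, so it costs `w 0 = 0`. If `k` of the
endpoints of an edge `{x, y}` of `G` lie in `S*`, its two hyperedges have split values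
`min (i - 1 + k) (i + 3 - k)` and `min (i + 1 + k) (i + 1 - k)`: both equal `i` when `k = 1`,
and they are `i - 1` and `i + 1` in some order when `k ∈ {0, 2}`.
-/

open Finset

section SplitValue

variable {W : Type*} [DecidableEq W]

lemma splitVal_eq_zero_of_subset {S e : Finset W} (h : e ⊆ S) : splitVal S e = 0 := by
  simp [splitVal, sdiff_eq_empty_iff_subset.mpr h]

lemma splitVal_eq_zero_of_disjoint {S e : Finset W} (h : Disjoint e S) : splitVal S e = 0 := by
  simp [splitVal, disjoint_iff_inter_eq_empty.mp h]

lemma splitVal_union_union {S A X B : Finset W} (hA : A ⊆ S) (hB : Disjoint B S)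
    (hAX : Disjoint A X) (hXB : Disjoint X B) :
    splitVal S (A ∪ X ∪ B) = min (#A + #(X ∩ S)) (#(X \ S) + #B) := by
  have hin : (A ∪ X ∪ B) ∩ S = A ∪ X ∩ S := by
    rw [union_inter_distrib_right, union_inter_distrib_right, inter_eq_left.mpr hA,
      disjoint_iff_inter_eq_empty.mp hB, union_empty]
  have hout : (A ∪ X ∪ B) \ S = X \ S ∪ B := by
    rw [union_sdiff_distrib, union_sdiff_distrib, sdiff_eq_empty_iff_subset.mpr hA,
      empty_union, sdiff_eq_self_of_disjoint hB]
  rw [splitVal, hin, hout, card_union_of_disjoint (hAX.mono_right inter_subset_left),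
    card_union_of_disjoint (hXB.mono_left sdiff_subset)]

end SplitValue

section Construction

variable {V : Type*} [DecidableEq V]

def edgeHyperedge (a b : ℕ) (e : Sym2 V) : Finset (Vtx V) := sSet V a ∪ edgeImg e ∪ tSet V b

lemma card_sSet (j : ℕ) : #(sSet V j) = j := by
  rw [sSet, card_image_of_injective _ fun _ _ h => by simpa [sV] using h, Nat.card_Icc]
  omega

lemma card_tSet (j : ℕ) : #(tSet V j) = j := by
  rw [tSet, card_image_of_injective _ fun _ _ h => by simpa [tV] using h, Nat.card_Icc]
  omega

lemma sSet_mono {j k : ℕ} (h : j ≤ k) : sSet V j ⊆ sSet V k :=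
  image_subset_image (Icc_subset_Icc_right h)

lemma tSet_mono {j k : ℕ} (h : j ≤ k) : tSet V j ⊆ tSet V k :=
  image_subset_image (Icc_subset_Icc_right h)

@[simp] lemma sV_mem_sSet {l j : ℕ} : (sV l : Vtx V) ∈ sSet V j ↔ 1 ≤ l ∧ l ≤ j := by
  simp [sSet, sV]

@[simp] lemma tV_mem_tSet {l j : ℕ} : (tV l : Vtx V) ∈ tSet V j ↔ 1 ≤ l ∧ l ≤ j := by
  simp [tSet, tV]

@[simp] lemma tV_notMem_sSet {l j : ℕ} : (tV l : Vtx V) ∉ sSet V j := by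
  simp [sSet, sV, tV]

@[simp] lemma sV_notMem_tSet {l j : ℕ} : (sV l : Vtx V) ∉ tSet V j := by
  simp [tSet, sV, tV]

@[simp] lemma sV_notMem_edgeImg {l : ℕ} {e : Sym2 V} : (sV l : Vtx V) ∉ edgeImg e := by
  simp [edgeImg, sV]

@[simp] lemma tV_notMem_edgeImg {l : ℕ} {e : Sym2 V} : (tV l : Vtx V) ∉ edgeImg e := by
  simp [edgeImg, tV]

lemma disjoint_sSet_edgeImg (j : ℕ) (e : Sym2 V) : Disjoint (sSet V j) (edgeImg e) := by
  simp [disjoint_left, sSet, edgeImg, sV]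

lemma disjoint_edgeImg_tSet (e : Sym2 V) (j : ℕ) : Disjoint (edgeImg e) (tSet V j) := by
  simp [disjoint_left, tSet, edgeImg, tV]

lemma pairFinset_eq_toFinset (e : Sym2 V) : pairFinset e = e.toFinset := by
  induction e using Sym2.ind with
  | _ x y => exact Sym2.toFinset_mk_eq.symm

lemma edgeImg_injective : Function.Injective (edgeImg (V := V)) := fun e f h => by
  have := image_injective Sum.inl_injective h
  rw [pairFinset_eq_toFinset, pairFinset_eq_toFinset] at this
  exact Sym2.ext fun x => by rw [← Sym2.mem_toFinset, this, Sym2.mem_toFinset]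

lemma card_edgeImg_of_mem_edgeFinset [Fintype V] {G : SimpleGraph V} [DecidableRel G.Adj]
    {e : Sym2 V} (he : e ∈ G.edgeFinset) : #(edgeImg e) = 2 := by
  rw [edgeImg, card_image_of_injective _ Sum.inl_injective, pairFinset_eq_toFinset,
    Sym2.card_toFinset_of_not_isDiag _ (G.not_isDiag_of_mem_edgeSet (by simpa using he))]

@[simp] lemma sV_mem_edgeHyperedge {l a b : ℕ} {e : Sym2 V} :
    (sV l : Vtx V) ∈ edgeHyperedge a b e ↔ 1 ≤ l ∧ l ≤ a := by
  simp [edgeHyperedge]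

@[simp] lemma tV_mem_edgeHyperedge {l a b : ℕ} {e : Sym2 V} :
    (tV l : Vtx V) ∈ edgeHyperedge a b e ↔ 1 ≤ l ∧ l ≤ b := by
  simp [edgeHyperedge]

lemma filter_isLeft_edgeHyperedge (a b : ℕ) (e : Sym2 V) :
    (edgeHyperedge a b e).filter (·.isLeft) = edgeImg e := by
  ext (v | x) <;> simp [edgeHyperedge, sSet, tSet, edgeImg, sV, tV]

lemma edgeHyperedge_injective (a b : ℕ) : Function.Injective (edgeHyperedge (V := V) a b) :=
  fun e f h => edgeImg_injective <| by
    rw [← filter_isLeft_edgeHyperedge a b e, h, filter_isLeft_edgeHyperedge]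

lemma H4_eq [Fintype V] (G : SimpleGraph V) [DecidableRel G.Adj] (α i : ℕ) :
    H4 G α i = (sSet V α).powersetCard 2 ∪ (tSet V α).powersetCard 2 ∪
      G.edgeFinset.image (edgeHyperedge (i - 1) (i + 1)) ∪
      G.edgeFinset.image (edgeHyperedge (i + 1) (i - 1)) :=
  rfl

lemma sum_H4 {M : Type*} [AddCommMonoid M] [Fintype V] (G : SimpleGraph V) [DecidableRel G.Adj]
    {α i : ℕ} (hi : 2 ≤ i) (f : Finset (Vtx V) → M) :
    ∑ h ∈ H4 G α i, f h =
      ∑ p ∈ (sSet V α).powersetCard 2, f p + ∑ p ∈ (tSet V α).powersetCard 2, f p +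
        ∑ e ∈ G.edgeFinset, (f (edgeHyperedge (i - 1) (i + 1) e) +
          f (edgeHyperedge (i + 1) (i - 1) e)) := by
  have hs : ∀ p ∈ (sSet V α).powersetCard 2, ∀ l, (tV l : Vtx V) ∉ p :=
    fun p hp _ hl => tV_notMem_sSet ((mem_powersetCard.1 hp).1 hl)
  have ht : ∀ p ∈ (tSet V α).powersetCard 2, ∀ l, (sV l : Vtx V) ∉ p :=
    fun p hp _ hl => sV_notMem_tSet ((mem_powersetCard.1 hp).1 hl)
  have h12 : Disjoint ((sSet V α).powersetCard 2) ((tSet V α).powersetCard 2) := by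
    refine disjoint_left.2 fun p hps hpt => ?_
    obtain ⟨x, hx⟩ := card_pos.1 ((mem_powersetCard.1 hps).2 ▸ two_pos)
    have hxs := (mem_powersetCard.1 hps).1 hx
    obtain ⟨l, -, rfl⟩ := mem_image.1 ((mem_powersetCard.1 hpt).1 hx)
    exact tV_notMem_sSet hxs
  have h3 : Disjoint ((sSet V α).powersetCard 2 ∪ (tSet V α).powersetCard 2)
      (G.edgeFinset.image (edgeHyperedge (i - 1) (i + 1))) := by
    simp only [disjoint_left, mem_union, mem_image]
    rintro _ (hp | hp) ⟨e, -, rfl⟩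
    · exact hs _ hp 1 (by simp)
    · exact ht _ hp 1 (by simp; omega)
  have h4 : Disjoint ((sSet V α).powersetCard 2 ∪ (tSet V α).powersetCard 2 ∪
      G.edgeFinset.image (edgeHyperedge (i - 1) (i + 1)))
      (G.edgeFinset.image (edgeHyperedge (i + 1) (i - 1))) := by
    simp only [disjoint_left, mem_union, mem_image]
    rintro _ ((hp | hp) | ⟨e, -, rfl⟩) ⟨f, -, hf⟩
    · exact hs _ hp 1 (hf ▸ by simp; omega)
    · exact ht _ hp 1 (hf ▸ by simp)
    · have hmem : (tV (i + 1) : Vtx V) ∈ edgeHyperedge (i + 1) (i - 1) f := hf ▸ by simp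
      have := (tV_mem_edgeHyperedge.1 hmem).2
      omega
  rw [H4_eq, sum_union h4, sum_union h3, sum_union h12,
    sum_image fun e _ f _ h => edgeHyperedge_injective _ _ h,
    sum_image fun e _ f _ h => edgeHyperedge_injective _ _ h, sum_add_distrib, add_assoc]

lemma splitVal_edgeHyperedge {S : Finset (Vtx V)} {a b : ℕ} (ha : sSet V a ⊆ S)
    (hb : Disjoint (tSet V b) S) (e : Sym2 V) :
    splitVal S (edgeHyperedge a b e) = min (a + #(edgeImg e ∩ S)) (#(edgeImg e \ S) + b) := by
  rw [edgeHyperedge, splitVal_union_union ha hb (disjoint_sSet_edgeImg a e)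
    (disjoint_edgeImg_tSet e b), card_sSet, card_tSet]

end Construction

lemma w_min_add_w_min (w : ℕ → ℝ) {i k l : ℕ} (hi : 1 ≤ i) (hkl : k + l = 2) :
    w (min (i - 1 + k) (l + (i + 1))) + w (min (i + 1 + k) (l + (i - 1))) =
      if k = 1 then 2 * w i else w (i - 1) + w (i + 1) := by
  obtain ⟨rfl, rfl⟩ | ⟨rfl, rfl⟩ | ⟨rfl, rfl⟩ :
      (k = 0 ∧ l = 2) ∨ (k = 1 ∧ l = 1) ∨ (k = 2 ∧ l = 0) := by omega
  · rw [min_eq_left (by omega), min_eq_right (by omega)]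
    simp [show 2 + (i - 1) = i + 1 by omega]
  · rw [min_eq_left (by omega), min_eq_right (by omega), show i - 1 + 1 = i by omega,
      show 1 + (i - 1) = i by omega]
    simp [two_mul]
  · rw [min_eq_right (by omega), min_eq_right (by omega)]
    simp [add_comm]

lemma sum_ite_eq_mul_card {ι R : Type*} [CommRing R] (s : Finset ι) (p : ι → Prop)
    [DecidablePred p] (a b : R) :
    ∑ x ∈ s, (if p x then a else b) = a * #(s.filter p) + b * (#s - #(s.filter p) : R) := by
  rw [sum_ite, sum_const, sum_const, nsmul_eq_mul, nsmul_eq_mul,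
    ← card_filter_add_card_filter_not (s := s) (p := p)]
  push_cast
  ring

theorem stmt4_general {V : Type*} [Fintype V] [DecidableEq V]
    (G : SimpleGraph V) [DecidableRel G.Adj]
    (m : ℕ) (hm : m = G.edgeFinset.card)
    (i : ℕ) (hi : 2 ≤ i) (α : ℕ) (hα : i + 2 ≤ α)
    (w : ℕ → ℝ) (hw0 : w 0 = 0)
    (S : Finset (Vtx V))
    (hS : sSet V α ⊆ S) (hT : ∀ v ∈ tSet V α, v ∉ S)
    (c : ℕ)
    (hc : c = (G.edgeFinset.filter
      (fun e => ((edgeImg e).filter (· ∈ S)).card = 1)).card) :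
    ∑ e ∈ H4 G α i, w (splitVal S e) =
      2 * w i * c + (w (i - 1) + w (i + 1)) * ((m : ℝ) - c) := by
  have hS' : sSet V (i + 1) ⊆ S := (sSet_mono (by omega)).trans hS
  have hT' : Disjoint (tSet V (i + 1)) S := (disjoint_left.2 hT).mono_left (tSet_mono (by omega))
  have hcliques : ∑ p ∈ (sSet V α).powersetCard 2, w (splitVal S p) +
      ∑ p ∈ (tSet V α).powersetCard 2, w (splitVal S p) = 0 := by
    rw [sum_eq_zero fun p hp => by
        rw [splitVal_eq_zero_of_subset ((mem_powersetCard.1 hp).1.trans hS), hw0],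
      sum_eq_zero fun p hp => by
        rw [splitVal_eq_zero_of_disjoint (disjoint_left.2 fun v hv => hT v
          ((mem_powersetCard.1 hp).1 hv)), hw0], add_zero]
  have hedge : ∀ e ∈ G.edgeFinset, w (splitVal S (edgeHyperedge (i - 1) (i + 1) e)) +
      w (splitVal S (edgeHyperedge (i + 1) (i - 1) e)) =
        if #(edgeImg e ∩ S) = 1 then 2 * w i else w (i - 1) + w (i + 1) := fun e he => by
    rw [splitVal_edgeHyperedge ((sSet_mono (by omega)).trans hS') hT',
      splitVal_edgeHyperedge hS' (hT'.mono_left (tSet_mono (by omega)))]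
    exact w_min_add_w_min w (by omega)
      ((card_inter_add_card_sdiff _ S).trans (card_edgeImg_of_mem_edgeFinset he))
  rw [sum_H4 G hi, hcliques, zero_add, sum_congr rfl hedge, sum_ite_eq_mul_card, hm, hc]
  simp only [filter_mem_eq_inter]

theorem stmt4 {V : Type*} [Fintype V] [DecidableEq V]
    (G : SimpleGraph V) [DecidableRel G.Adj]
    (m : ℕ) (hm : m = G.edgeFinset.card)
    (i : ℕ) (hi : 2 ≤ i) (α : ℕ) (hα : i + 2 ≤ α)
    (w : ℕ → ℝ) (hw0 : w 0 = 0) (hw1 : w 1 = 1) (hw : ∀ n, 0 ≤ w n)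
    (S : Finset (Vtx V))
    (hS : sSet V α ⊆ S) (hT : ∀ v ∈ tSet V α, v ∉ S)
    (c : ℕ)
    (hc : c = (G.edgeFinset.filter
      (fun e => ((edgeImg e).filter (· ∈ S)).card = 1)).card) :
    ∑ e ∈ H4 G α i, w (splitVal S e) =
      2 * w i * c + (w (i - 1) + w (i + 1)) * ((m : ℝ) - c) :=
  stmt4_general G m hm i hi α hα w hw0 S hS hT c hc
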